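/- arXiv:0809.5102 — 3 statements merged into one kernel-verified Lean document; each statement's English description precedes it below -/
import Mathlib

section
/- For any rate matrix A (i.e., an N×N real matrix whose off-diagonal entries are nonnegative and whose columns sum to zero) and any standard basis vector V = e_i of ℝᴺ, the matrix diag(AV) − diag(V)A* − A diag(V) is symmetric and positive semidefinite. -/
/-!
With `a` the `i`-th column of `A`, the matrix is `diag a - eᵢ aᵀ - a eᵢᵀ`. Since the entries of
`a` sum to zero, it equals `∑ⱼ aⱼ (eⱼ - eᵢ)(eⱼ - eᵢ)ᵀ`, a combination of positive semidefinite
rank-one matrices whose weights `aⱼ = A j i` are nonnegative for `j ≠ i` (the `j = i` term vanishes).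
-/

/-- The seminorm-defining matrix `diag(AV) − diag(V)A* − A diag(V)`. -/
noncomputable def bform {N : ℕ} (A : Matrix (Fin N) (Fin N) ℝ) (V : Fin N → ℝ) :
    Matrix (Fin N) (Fin N) ℝ :=
  Matrix.diagonal (A.mulVec V) - Matrix.diagonal V * A.transpose - A * Matrix.diagonal V

open Matrix

namespace Matrix

variable {n R : Type*} [Fintype n] [DecidableEq n]

theorem diagonal_single_one_mul [NonAssocSemiring R] (i : n) (M : Matrix n n R) :
    diagonal (Pi.single i 1) * M = vecMulVec (Pi.single i 1) (M.row i) := by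
  ext j k
  by_cases h : j = i <;> simp [diagonal_mul, vecMulVec_apply, h]

theorem mul_diagonal_single_one [NonAssocSemiring R] (i : n) (M : Matrix n n R) :
    M * diagonal (Pi.single i 1) = vecMulVec (M.col i) (Pi.single i 1) := by
  ext j k
  by_cases h : k = i <;> simp [mul_diagonal, vecMulVec_apply, h]

theorem sum_smul_vecMulVec_single_sub_single [CommRing R] (a : n → R) (i : n)
    (ha : ∑ j, a j = 0) :
    ∑ j, a j • vecMulVec (Pi.single j 1 - Pi.single i 1) (Pi.single j 1 - Pi.single i 1) =
      diagonal a - vecMulVec (Pi.single i 1) a - vecMulVec a (Pi.single i 1) := by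
  ext k l
  simp only [Matrix.sum_apply, Matrix.smul_apply, vecMulVec_apply, Matrix.sub_apply,
    diagonal_apply, Pi.sub_apply, Pi.single_apply, smul_eq_mul, mul_sub, Finset.sum_sub_distrib,
    ite_mul, mul_ite, mul_one, mul_zero, one_mul, zero_mul]
  simp +contextual [Finset.sum_ite_eq, ha]

theorem posSemidef_diagonal_sub_vecMulVec_single
    [CommRing R] [PartialOrder R] [StarRing R] [TrivialStar R] [StarOrderedRing R]
    [IsOrderedRing R] (a : n → R) (i : n) (ha : ∑ j, a j = 0) (ha_nonneg : ∀ j, j ≠ i → 0 ≤ a j) :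
    (diagonal a - vecMulVec (Pi.single i 1) a - vecMulVec a (Pi.single i 1)).PosSemidef := by
  rw [← sum_smul_vecMulVec_single_sub_single a i ha]
  refine posSemidef_sum _ fun j _ => ?_
  obtain rfl | hj := eq_or_ne j i
  · simpa using PosSemidef.zero
  · have h := posSemidef_vecMulVec_self_star (Pi.single j 1 - Pi.single i 1 : n → R)
    rw [star_trivial] at h
    exact h.smul (ha_nonneg j hj)

end Matrix

theorem bform_single_one {N : ℕ} (A : Matrix (Fin N) (Fin N) ℝ) (i : Fin N) :
    bform A (Pi.single i 1) = diagonal (A.col i) - vecMulVec (Pi.single i 1) (A.col i) -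
      vecMulVec (A.col i) (Pi.single i 1) := by
  rw [bform, mulVec_single_one, diagonal_single_one_mul, mul_diagonal_single_one, row_transpose]

theorem stmt_2 {N : ℕ} (A : Matrix (Fin N) (Fin N) ℝ)
    (hoff : ∀ j k : Fin N, j ≠ k → 0 ≤ A j k)
    (hcol : ∀ k : Fin N, ∑ j, A j k = 0)
    (i : Fin N) :
    (bform A (Pi.single i 1)).IsSymm ∧ (bform A (Pi.single i 1)).PosSemidef := by
  have hpsd : (bform A (Pi.single i 1)).PosSemidef := by
    rw [bform_single_one]
    exact posSemidef_diagonal_sub_vecMulVec_single _ i (hcol i) fun j hj => hoff j i hj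
  exact ⟨isHermitian_iff_isSymm.mp hpsd.isHermitian, hpsd⟩
end

section
/- For any K×N real matrix C, any rate matrix A with all entries bounded in absolute value by a, and any standard basis vector V = e_i of ℝᴺ, one has Tr(C[diag(AV) − diag(V)A* − A diag(V)]C*) ≤ 3a · Tr(CC*). -/
open Matrix Finset

theorem Matrix.trace_mul_mul_transpose {m n R : Type*} [Fintype m] [Fintype n] [CommSemiring R]
    (C : Matrix m n R) (M : Matrix n n R) :
    (C * M * Cᵀ).trace = ∑ r, C r ⬝ᵥ (M *ᵥ C r) := by
  simp only [trace, diag, mul_apply, transpose_apply, dotProduct, mulVec, sum_mul, mul_sum]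
  refine sum_congr rfl fun r _ => ?_
  rw [sum_comm]
  exact sum_congr rfl fun j _ => sum_congr rfl fun k _ => by ring

theorem Matrix.trace_mul_transpose_self {m n R : Type*} [Fintype m] [Fintype n] [CommSemiring R]
    (C : Matrix m n R) : (C * Cᵀ).trace = ∑ r, C r ⬝ᵥ C r := by
  classical
  simpa using trace_mul_mul_transpose C 1

theorem sum_erase_mul_sq_sub_le {ι : Type*} [Fintype ι] [DecidableEq ι] {a : ℝ}
    (w c : ι → ℝ) (i : ι) (hw : ∀ j ≠ i, 0 ≤ w j ∧ w j ≤ a)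
    (hsum : ∑ j ∈ univ.erase i, w j ≤ a) :
    ∑ j ∈ univ.erase i, w j * (c j - c i) ^ 2 ≤ 2 * a * ∑ j, c j ^ 2 := by
  calc ∑ j ∈ univ.erase i, w j * (c j - c i) ^ 2
      ≤ ∑ j ∈ univ.erase i, (2 * a * c j ^ 2 + 2 * w j * c i ^ 2) := by
        refine sum_le_sum fun j hj => ?_
        obtain ⟨hw0, hwa⟩ := hw j (ne_of_mem_erase hj)
        nlinarith [mul_nonneg hw0 (sq_nonneg (c j + c i)),
          mul_nonneg (sub_nonneg.2 hwa) (sq_nonneg (c j))]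
    _ = 2 * a * ∑ j ∈ univ.erase i, c j ^ 2 + 2 * (∑ j ∈ univ.erase i, w j) * c i ^ 2 := by
        rw [sum_add_distrib, mul_sum, mul_assoc, sum_mul, mul_sum]
        simp only [mul_assoc]
    _ ≤ 2 * a * ∑ j ∈ univ.erase i, c j ^ 2 + 2 * a * c i ^ 2 := by gcongr
    _ = 2 * a * ∑ j, c j ^ 2 := by rw [← add_sum_erase _ _ (mem_univ i)]; ring

theorem bform_single_mulVec {N : ℕ} (A : Matrix (Fin N) (Fin N) ℝ) (i : Fin N) (c : Fin N → ℝ) :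
    bform A (Pi.single i 1) *ᵥ c =
      fun j => A j i * c j - (Pi.single i (∑ k, A k i * c k) : Fin N → ℝ) j - A j i * c i := by
  ext j
  rcases eq_or_ne j i with rfl | hji <;>
    simp [bform, mulVec, dotProduct, diagonal_mul, mul_diagonal, diagonal_apply, Pi.single_apply,
      sub_mul, sum_sub_distrib, ite_mul, *]

theorem dotProduct_bform_single_mulVec {N : ℕ} (A : Matrix (Fin N) (Fin N) ℝ) (i : Fin N)
    (hcol : ∑ j, A j i = 0) (c : Fin N → ℝ) :
    c ⬝ᵥ (bform A (Pi.single i 1) *ᵥ c) = ∑ j ∈ univ.erase i, A j i * (c j - c i) ^ 2 := by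
  calc c ⬝ᵥ (bform A (Pi.single i 1) *ᵥ c)
      = ∑ j, (A j i * (c j - c i) ^ 2 - A j i * c i ^ 2) := by
        simp only [bform_single_mulVec, dotProduct, Pi.single_apply, mul_sub, mul_ite, mul_zero,
          sum_sub_distrib, sum_ite_eq', mem_univ, if_true, mul_sum]
        rw [← sum_sub_distrib, ← sum_sub_distrib, ← sum_sub_distrib]
        exact sum_congr rfl fun j _ => by ring
    _ = ∑ j, A j i * (c j - c i) ^ 2 := by
        rw [sum_sub_distrib, ← sum_mul, hcol, zero_mul, sub_zero]
    _ = ∑ j ∈ univ.erase i, A j i * (c j - c i) ^ 2 := (sum_erase _ (by simp)).symm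

theorem dotProduct_bform_single_mulVec_le {N : ℕ} (A : Matrix (Fin N) (Fin N) ℝ) (a : ℝ)
    (hoff : ∀ j k : Fin N, j ≠ k → 0 ≤ A j k)
    (hcol : ∀ k : Fin N, ∑ j, A j k = 0)
    (habs : ∀ j k : Fin N, |A j k| ≤ a) (i : Fin N) (c : Fin N → ℝ) :
    c ⬝ᵥ (bform A (Pi.single i 1) *ᵥ c) ≤ 2 * a * (c ⬝ᵥ c) := by
  have hoff_sum : ∑ j ∈ univ.erase i, A j i ≤ a := by
    rw [sum_erase_eq_sub (mem_univ i), hcol i, zero_sub]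
    exact (neg_le_abs _).trans (habs i i)
  have hnorm : c ⬝ᵥ c = ∑ j, c j ^ 2 := by simp only [dotProduct, sq]
  rw [dotProduct_bform_single_mulVec A i (hcol i), hnorm]
  exact sum_erase_mul_sq_sub_le (fun j => A j i) c i
    (fun j hj => ⟨hoff j i hj, (le_abs_self _).trans (habs j i)⟩) hoff_sum

theorem stmt_3 {N K : ℕ} (A : Matrix (Fin N) (Fin N) ℝ) (a : ℝ)
    (hoff : ∀ j k : Fin N, j ≠ k → 0 ≤ A j k)
    (hcol : ∀ k : Fin N, ∑ j, A j k = 0)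
    (habs : ∀ j k : Fin N, |A j k| ≤ a)
    (i : Fin N) (C : Matrix (Fin K) (Fin N) ℝ) :
    Matrix.trace (C * bform A (Pi.single i 1) * C.transpose) ≤
      3 * a * Matrix.trace (C * C.transpose) := by
  have ha : 0 ≤ a := (abs_nonneg _).trans (habs i i)
  rw [trace_mul_mul_transpose, trace_mul_transpose_self, mul_sum]
  refine sum_le_sum fun r _ => ?_
  calc C r ⬝ᵥ (bform A (Pi.single i 1) *ᵥ C r)
      ≤ 2 * a * (C r ⬝ᵥ C r) := dotProduct_bform_single_mulVec_le A a hoff hcol habs i (C r)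
    _ ≤ 3 * a * (C r ⬝ᵥ C r) := by
        gcongr
        · exact dotProduct_self_star_nonneg (C r)
        · norm_num
end

section
/- If a sequence of nonnegative integrable functions g_n on [0,T] satisfies ∫_{(t,T]} g_{n+1}(u) du ≤ K ∫_{(t,T]} e^{K(u−t)} ∫_{(u,T]} g_n(s) ds du for all t and n, with K ≥ 0, then ∫_{(t,T]} g_{n}(u) du ≤ ([T K e^{TK}]ⁿ / n!) ∫_{(t,T]} g_0(u) du for all n, and hence Σ_n (∫_{(t,T]} g_n(u) du)^{1/2} < ∞. -/
/-!
Write `Fₙ(t) = ∫_{(t,T]} gₙ`. Bounding `e^{K(u-t)}` by `e^{TK}`, the hypothesis becomes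
`Fₙ₊₁(t) ≤ C ∫_{(t,T]} Fₙ` with `C = K e^{TK}`, and since `F₀` is antitone, induction gives
the Picard estimate `Fₙ(t) ≤ (C (T - t))ⁿ / n! · F₀(t)`. The square roots are summable
because, by AM–GM, `√(aⁿ/n!) = √((2a)ⁿ/n! · 2⁻ⁿ) ≤ ((2a)ⁿ/n! + 2⁻ⁿ) / 2`.
-/

open MeasureTheory Set Real
open scoped Nat

lemma setIntegral_Ioc_sub_pow {t T : ℝ} (htT : t ≤ T) (n : ℕ) :
    ∫ u in Ioc t T, (T - u) ^ n = (T - t) ^ (n + 1) / (n + 1) := by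
  rw [← intervalIntegral.integral_of_le htT,
    intervalIntegral.integral_comp_sub_left (· ^ n) T]
  simp [integral_pow]

lemma le_pow_div_factorial_of_le_setIntegral_mul {T C : ℝ} (hC : 0 ≤ C)
    {k : ℝ → ℝ → ℝ} {F : ℕ → ℝ → ℝ}
    (hk : ∀ t ∈ Icc 0 T, ∀ u ∈ Ioc t T, 0 ≤ k t u ∧ k t u ≤ C)
    (hF : ∀ n, ∀ u ∈ Icc 0 T, 0 ≤ F n u) (hF₀ : AntitoneOn (F 0) (Icc 0 T))
    (hiter : ∀ n, ∀ t ∈ Icc 0 T, F (n + 1) t ≤ ∫ u in Ioc t T, k t u * F n u) (n : ℕ) :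
    ∀ t ∈ Icc 0 T, F n t ≤ (C * (T - t)) ^ n / n ! * F 0 t := by
  induction n with
  | zero => simp
  | succ n ih =>
    intro t ht
    have hmem : ∀ u ∈ Ioc t T, u ∈ Icc 0 T := fun u hu => ⟨ht.1.trans hu.1.le, hu.2⟩
    have hpointwise : ∀ u ∈ Ioc t T,
        k t u * F n u ≤ C ^ (n + 1) / n ! * F 0 t * (T - u) ^ n := by
      intro u hu
      have hTu : 0 ≤ T - u := sub_nonneg.2 hu.2
      calc k t u * F n u ≤ C * ((C * (T - u)) ^ n / n ! * F 0 u) :=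
            mul_le_mul (hk t ht u hu).2 (ih u (hmem u hu)) (hF n u (hmem u hu)) hC
        _ ≤ C * ((C * (T - u)) ^ n / n ! * F 0 t) := by
            gcongr
            exact hF₀ ht (hmem u hu) hu.1.le
        _ = C ^ (n + 1) / n ! * F 0 t * (T - u) ^ n := by rw [mul_pow]; ring
    calc F (n + 1) t ≤ ∫ u in Ioc t T, k t u * F n u := hiter n t ht
      _ ≤ ∫ u in Ioc t T, C ^ (n + 1) / n ! * F 0 t * (T - u) ^ n := by
          refine integral_mono_of_nonneg ?_ (Continuous.integrableOn_Ioc (by fun_prop))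
            (ae_restrict_of_forall_mem measurableSet_Ioc hpointwise)
          exact ae_restrict_of_forall_mem measurableSet_Ioc fun u hu =>
            mul_nonneg (hk t ht u hu).1 (hF n u (hmem u hu))
      _ = C ^ (n + 1) / n ! * F 0 t * ((T - t) ^ (n + 1) / (n + 1)) := by
          rw [integral_const_mul, setIntegral_Ioc_sub_pow ht.2]
      _ = (C * (T - t)) ^ (n + 1) / (n + 1)! * F 0 t := by
          rw [Nat.factorial_succ, mul_pow]
          push_cast
          field_simp

lemma summable_sqrt_mul {f g : ℕ → ℝ} (hf : ∀ n, 0 ≤ f n) (hg : ∀ n, 0 ≤ g n)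
    (hfs : Summable f) (hgs : Summable g) : Summable fun n => √(f n * g n) := by
  refine ((hfs.add hgs).div_const 2).of_nonneg_of_le (fun n => sqrt_nonneg _) fun n => ?_
  have h := two_mul_le_add_sq (√(f n)) (√(g n))
  rw [sq_sqrt (hf n), sq_sqrt (hg n)] at h
  rw [sqrt_mul (hf n)]
  linarith

lemma summable_sqrt_pow_div_factorial {a : ℝ} (ha : 0 ≤ a) :
    Summable fun n : ℕ => √(a ^ n / n !) := by
  refine (summable_sqrt_mul (fun n => by positivity) (fun n => by positivity)
    (summable_pow_div_factorial (2 * a)) summable_geometric_two).congr fun n => ?_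
  rw [div_mul_eq_mul_div, ← mul_pow, show 2 * a * (1 / 2) = a by ring]

lemma antitoneOn_setIntegral_Ioc {f : ℝ → ℝ} {a T : ℝ} (hf : ∀ u ∈ Icc a T, 0 ≤ f u)
    (hfi : IntegrableOn f (Icc a T)) : AntitoneOn (fun t => ∫ u in Ioc t T, f u) (Icc a T) :=
  fun _ ht _ _ htv =>
    setIntegral_mono_set (hfi.mono_set (Ioc_subset_Icc_self.trans (Icc_subset_Icc_left ht.1)))
      (ae_restrict_of_forall_mem measurableSet_Ioc fun u hu => hf u ⟨ht.1.trans hu.1.le, hu.2⟩)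
      (Ioc_subset_Ioc_left htv).eventuallyLE

lemma mul_exp_mul_sub_le {K T t u : ℝ} (hK : 0 ≤ K) (ht : 0 ≤ t) (hu : u ≤ T) :
    K * exp (K * (u - t)) ≤ K * exp (T * K) :=
  mul_le_mul_of_nonneg_left (exp_le_exp.2 <| by
    nlinarith [mul_nonneg hK (by linarith : 0 ≤ T - (u - t))]) hK

theorem stmt_13_general (T K : ℝ) (hK : 0 ≤ K) (g : ℕ → ℝ → ℝ)
    (hg0 : ∀ n, ∀ u ∈ Set.Icc (0 : ℝ) T, 0 ≤ g n u)
    (hgint : ∀ n, IntegrableOn (g n) (Set.Icc (0 : ℝ) T))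
    (hiter : ∀ n, ∀ t ∈ Set.Icc (0 : ℝ) T,
      (∫ u in Set.Ioc t T, g (n + 1) u) ≤
        K * ∫ u in Set.Ioc t T, Real.exp (K * (u - t)) * ∫ s in Set.Ioc u T, g n s) :
    ∀ t ∈ Set.Icc (0 : ℝ) T,
      (∀ n : ℕ, (∫ u in Set.Ioc t T, g n u) ≤
        (T * K * Real.exp (T * K)) ^ n / (Nat.factorial n) * ∫ u in Set.Ioc t T, g 0 u) ∧
      Summable (fun n : ℕ => Real.sqrt (∫ u in Set.Ioc t T, g n u)) := by
  intro t ht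
  set F : ℕ → ℝ → ℝ := fun n s => ∫ u in Ioc s T, g n u
  have hF : ∀ n, ∀ s ∈ Icc 0 T, 0 ≤ F n s := fun n s hs =>
    setIntegral_nonneg measurableSet_Ioc fun u hu => hg0 n u ⟨hs.1.trans hu.1.le, hu.2⟩
  have hk : ∀ s ∈ Icc 0 T, ∀ u ∈ Ioc s T,
      0 ≤ K * exp (K * (u - s)) ∧ K * exp (K * (u - s)) ≤ K * exp (T * K) :=
    fun s hs u hu => ⟨by positivity, mul_exp_mul_sub_le hK hs.1 hu.2⟩
  have hiter' : ∀ n, ∀ s ∈ Icc 0 T,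
      F (n + 1) s ≤ ∫ u in Ioc s T, K * exp (K * (u - s)) * F n u :=
    fun n s hs => by simpa only [mul_assoc, integral_const_mul] using hiter n s hs
  have hbound : ∀ n : ℕ, F n t ≤ (T * K * exp (T * K)) ^ n / n ! * F 0 t := fun n => by
    refine (le_pow_div_factorial_of_le_setIntegral_mul (by positivity) hk hF
      (antitoneOn_setIntegral_Ioc (hg0 0) (hgint 0)) hiter' n t ht).trans ?_
    have : K * exp (T * K) * (T - t) ≤ T * K * exp (T * K) := by
      nlinarith [ht.1, mul_nonneg hK (exp_pos (T * K)).le]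
    gcongr
    exacts [hF 0 t ht, mul_nonneg (by positivity) (sub_nonneg.2 ht.2)]
  refine ⟨hbound, ?_⟩
  have ha : 0 ≤ T * K * exp (T * K) := by have := ht.1.trans ht.2; positivity
  refine ((summable_sqrt_pow_div_factorial ha).mul_right √(F 0 t)).of_nonneg_of_le
    (fun n => sqrt_nonneg _) fun n => ?_
  rw [← sqrt_mul (by positivity)]
  exact sqrt_le_sqrt (hbound n)

theorem stmt_13 (T K : ℝ) (hT : 0 < T) (hK : 0 ≤ K) (g : ℕ → ℝ → ℝ)
    (hg0 : ∀ n, ∀ u ∈ Set.Icc (0 : ℝ) T, 0 ≤ g n u)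
    (hgint : ∀ n, IntegrableOn (g n) (Set.Icc (0 : ℝ) T))
    (hiter : ∀ n, ∀ t ∈ Set.Icc (0 : ℝ) T,
      (∫ u in Set.Ioc t T, g (n + 1) u) ≤
        K * ∫ u in Set.Ioc t T, Real.exp (K * (u - t)) * ∫ s in Set.Ioc u T, g n s) :
    ∀ t ∈ Set.Icc (0 : ℝ) T,
      (∀ n : ℕ, (∫ u in Set.Ioc t T, g n u) ≤
        (T * K * Real.exp (T * K)) ^ n / (Nat.factorial n) * ∫ u in Set.Ioc t T, g 0 u) ∧
      Summable (fun n : ℕ => Real.sqrt (∫ u in Set.Ioc t T, g n u)) :=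
  stmt_13_general T K hK g hg0 hgint hiter
end
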